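/- Let S ⊆ ℕ^d be a C-semigroup, let ≺ be a term order on ℕ^d, and let F = F(S)_≺ = max_≺ H(S). Then S is ≺-pseudo-symmetric (i.e., F has all coordinates even and PF(S) = {F, F/2}) if and only if F has all coordinates even and for every g ∈ cone(S) ∩ ℕ^d one has: g ∈ S if and only if (F − g ∉ S and g ≠ F/2). -/
import Mathlib


open Finset BigOperators

/-! Basic notions for affine semigroups in `ℕ^d`, following
"Affine semigroups of maximal projective dimension". -/

def natToQ {d : ℕ} (x : Fin d → ℕ) : Fin d → ℚ := fun i => (x i : ℚ)

def natToZ {d : ℕ} (x : Fin d → ℕ) : Fin d → ℤ := fun i => (x i : ℤ)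

/-- The rational cone spanned by an affine semigroup `S ⊆ ℕ^d`: the set of
nonnegative rational combinations of elements of `S` (equivalently, of any
generating set of `S`). -/
def cone {d : ℕ} (S : AddSubmonoid (Fin d → ℕ)) : Set (Fin d → ℚ) :=
  { q | ∃ (m : ℕ) (lam : Fin m → ℚ) (s : Fin m → Fin d → ℕ),
      (∀ i, 0 ≤ lam i) ∧ (∀ i, s i ∈ S) ∧ q = ∑ i, lam i • natToQ (s i) }

/-- `H(S) = (cone(S) \ S) ∩ ℕ^d`. -/
def HSet {d : ℕ} (S : AddSubmonoid (Fin d → ℕ)) : Set (Fin d → ℕ) :=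
  { x | natToQ x ∈ cone S ∧ x ∉ S }

/-- The set of pseudo-Frobenius elements of `S`. -/
def PF {d : ℕ} (S : AddSubmonoid (Fin d → ℕ)) : Set (Fin d → ℕ) :=
  { f | f ∈ HSet S ∧ ∀ s ∈ S, s ≠ 0 → f + s ∈ S }

/-- `A` is a minimal generating set of `S`. -/
def IsMinGenSet {d : ℕ} (A : Set (Fin d → ℕ)) (S : AddSubmonoid (Fin d → ℕ)) : Prop :=
  AddSubmonoid.closure A = S ∧ ∀ x ∈ A, x ∉ AddSubmonoid.closure (A \ {x})

/-- The family `a : Fin n → ℕ^d` is a minimal generating family (the minimal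
generating set) of `S`. -/
def MinGen {n d : ℕ} (a : Fin n → Fin d → ℕ) (S : AddSubmonoid (Fin d → ℕ)) : Prop :=
  Function.Injective a ∧ IsMinGenSet (Set.range a) S

/-- `G(S)`: the subgroup of `ℤ^d` generated by `S`. -/
def grpOf {d : ℕ} (S : AddSubmonoid (Fin d → ℕ)) : AddSubgroup (Fin d → ℤ) :=
  AddSubgroup.closure (natToZ '' (S : Set (Fin d → ℕ)))

/-- `S = S₁ +_c S₂` is a gluing of the affine semigroups `S₁` and `S₂`. -/
structure IsGluing {d : ℕ} (S S₁ S₂ : AddSubmonoid (Fin d → ℕ)) (c : Fin d → ℕ) : Prop where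
  exists_partition : ∃ A₁ A₂ : Set (Fin d → ℕ),
    A₁.Finite ∧ A₂.Finite ∧ A₁.Nonempty ∧ A₂.Nonempty ∧ Disjoint A₁ A₂ ∧
    IsMinGenSet (A₁ ∪ A₂) S ∧ S₁ = AddSubmonoid.closure A₁ ∧ S₂ = AddSubmonoid.closure A₂
  mem₁ : c ∈ S₁
  mem₂ : c ∈ S₂
  grp : grpOf S₁ ⊓ grpOf S₂ = AddSubgroup.zmultiples (natToZ c)

/-- A term order on `ℕ^d`: a total order compatible with addition for which `0`
is the least element. -/
structure TermOrder (d : ℕ) : Type where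
  lt : (Fin d → ℕ) → (Fin d → ℕ) → Prop
  irrefl : ∀ x, ¬ lt x x
  trans : ∀ {x y z}, lt x y → lt y z → lt x z
  total : ∀ x y, x = y ∨ lt x y ∨ lt y x
  zero_lt : ∀ x, x ≠ 0 → lt 0 x
  add_compat : ∀ {x y : Fin d → ℕ} (z : Fin d → ℕ), lt x y → lt (x + z) (y + z)

/-- `F` is the Frobenius element `F(S)_≺ = max_≺ H(S)`. -/
def IsFrob {d : ℕ} (τ : TermOrder d) (S : AddSubmonoid (Fin d → ℕ)) (F : Fin d → ℕ) : Prop :=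
  F ∈ HSet S ∧ ∀ x ∈ HSet S, x ≠ F → τ.lt x F

/-- `S` is `≺`-almost symmetric. -/
def AlmostSym {d : ℕ} (τ : TermOrder d) (S : AddSubmonoid (Fin d → ℕ)) : Prop :=
  ∃ F, IsFrob τ S F ∧ ((PF S) \ {F}).Nonempty ∧
    ∀ g ∈ (PF S) \ {F}, ∃ h ∈ (PF S) \ {F}, g + h = F

/-- A row-factorization matrix of `f` relative to the generators `a`. -/
def IsRFMatrix {n d : ℕ} (a : Fin n → Fin d → ℕ) (f : Fin d → ℕ)
    (M : Matrix (Fin n) (Fin n) ℤ) : Prop :=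
  (∀ i, M i i = -1) ∧ (∀ i j, i ≠ j → 0 ≤ M i j) ∧
  (∀ i, ∑ j, M i j • natToZ (a j) = natToZ f)

/-- The monomial `x^u` in `k[x_1,…,x_n]`. -/
noncomputable def mono (k : Type*) [CommRing k] {n : ℕ} (u : Fin n → ℕ) :
    MvPolynomial (Fin n) k :=
  MvPolynomial.monomial (Finsupp.equivFunOnFinite.symm u) 1

/-- The binomial `x^u - x^v`. -/
noncomputable def binom (k : Type*) [CommRing k] {n : ℕ} (u v : Fin n → ℕ) :
    MvPolynomial (Fin n) k :=
  mono k u - mono k v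

/-- The semigroup map `π : k[x_1,…,x_n] → k[t_1,…,t_d]`, `x_i ↦ t^{a_i}`. -/
noncomputable def toricMap (k : Type*) [CommRing k] {n d : ℕ} (a : Fin n → Fin d → ℕ) :
    MvPolynomial (Fin n) k →ₐ[k] MvPolynomial (Fin d) k :=
  MvPolynomial.aeval (fun i => mono k (a i))

/-- The toric ideal `I_S = ker π`. -/
noncomputable def toricIdeal (k : Type*) [CommRing k] {n d : ℕ} (a : Fin n → Fin d → ℕ) :
    Ideal (MvPolynomial (Fin n) k) :=
  RingHom.ker (toricMap k a).toRingHom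

/-- Positive part of an integer vector. -/
def pospart {n : ℕ} (v : Fin n → ℤ) : Fin n → ℕ := fun i => (v i).toNat

/-- Negative part of an integer vector. -/
def negpart {n : ℕ} (v : Fin n → ℤ) : Fin n → ℕ := fun i => (-(v i)).toNat

/-- `p` is an RF-relation: a binomial obtained from the difference of two rows of
some RF-matrix of some pseudo-Frobenius element. -/
def IsRFRelation (k : Type*) [CommRing k] {n d : ℕ} (a : Fin n → Fin d → ℕ)
    (S : AddSubmonoid (Fin d → ℕ)) (p : MvPolynomial (Fin n) k) : Prop :=
  ∃ f ∈ PF S, ∃ M : Matrix (Fin n) (Fin n) ℤ, IsRFMatrix a f M ∧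
    ∃ i j : Fin n, i < j ∧
      p = binom k (pospart fun l => M i l - M j l) (negpart fun l => M i l - M j l)

/-- The toric ideal `I_S` is generic: it is minimally generated by binomials of
full support. -/
def IsGeneric (k : Type*) [CommRing k] {n d : ℕ} (a : Fin n → Fin d → ℕ) : Prop :=
  ∃ G : Finset (MvPolynomial (Fin n) k),
    (∀ g ∈ G, ∃ u v : Fin n → ℕ, g = binom k u v ∧ ∀ l, u l ≠ 0 ∨ v l ≠ 0) ∧
    Ideal.span (G : Set (MvPolynomial (Fin n) k)) = toricIdeal k a ∧
    ∀ G' : Finset (MvPolynomial (Fin n) k), G' ⊂ G →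
      Ideal.span (G' : Set (MvPolynomial (Fin n) k)) ≠ toricIdeal k a

/-- The Apéry set `Ap(S, x) = { y ∈ S : y - x ∈ H(S) }`. -/
def Ap {d : ℕ} (S : AddSubmonoid (Fin d → ℕ)) (x : Fin d → ℕ) : Set (Fin d → ℕ) :=
  { y | y ∈ S ∧ ∃ z ∈ HSet S, y = x + z }

/-- `UF(S)`: elements with a unique factorization in terms of the generators `a`. -/
def UF {n d : ℕ} (a : Fin n → Fin d → ℕ) : Set (Fin d → ℕ) :=
  { x | ∃! u : Fin n → ℕ, x = ∑ l, u l • a l }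

open Classical in
/-- The multivariate Hilbert series `Σ_{a ∈ S} t^a` of `S`. -/
noncomputable def hilbSeries {d : ℕ} (S : AddSubmonoid (Fin d → ℕ)) :
    MvPowerSeries (Fin d) ℤ :=
  fun e => if Finsupp.equivFunOnFinite e ∈ S then 1 else 0

lemma natToQ_add {d : ℕ} (a b : Fin d → ℕ) : natToQ (a + b) = natToQ a + natToQ b := by
  funext i
  simp only [natToQ, Pi.add_apply]
  push_cast
  ring

lemma mem_cone_of_mem {d : ℕ} {S : AddSubmonoid (Fin d → ℕ)} {s : Fin d → ℕ} (hs : s ∈ S) :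
    natToQ s ∈ cone S := by
  refine ⟨1, fun _ => 1, fun _ => s, fun _ => zero_le_one, fun _ => hs, ?_⟩
  simp

lemma cone_add {d : ℕ} {S : AddSubmonoid (Fin d → ℕ)} {p q : Fin d → ℚ}
    (hp : p ∈ cone S) (hq : q ∈ cone S) : p + q ∈ cone S := by
  obtain ⟨m1, l1, s1, h1, h2, rfl⟩ := hp
  obtain ⟨m2, l2, s2, h3, h4, rfl⟩ := hq
  refine ⟨m1 + m2, Fin.append l1 l2, Fin.append s1 s2, ?_, ?_, ?_⟩
  · intro i
    refine Fin.addCases (fun j => ?_) (fun j => ?_) i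
    · simpa [Fin.append_left] using h1 j
    · simpa [Fin.append_right] using h3 j
  · intro i
    refine Fin.addCases (fun j => ?_) (fun j => ?_) i
    · simpa [Fin.append_left] using h2 j
    · simpa [Fin.append_right] using h4 j
  · rw [Fin.sum_univ_add]
    simp [Fin.append_left, Fin.append_right]

lemma cone_smul {d : ℕ} {S : AddSubmonoid (Fin d → ℕ)} {p : Fin d → ℚ}
    (hp : p ∈ cone S) {c : ℚ} (hc : 0 ≤ c) : c • p ∈ cone S := by
  obtain ⟨m, lam, s, h1, h2, rfl⟩ := hp
  exact ⟨m, fun i => c * lam i, s, fun i => mul_nonneg hc (h1 i), h2, by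
    rw [Finset.smul_sum]; simp [smul_smul]⟩

lemma exists_tau_max {d : ℕ} (τ : TermOrder d) (T : Finset (Fin d → ℕ)) (hT : T.Nonempty) :
    ∃ f ∈ T, ∀ x ∈ T, x ≠ f → τ.lt x f := by
  induction T using Finset.induction_on with
  | empty => exact absurd hT (by simp)
  | @insert a s ha ih =>
    rcases s.eq_empty_or_nonempty with rfl | hs
    · refine ⟨a, by simp, ?_⟩
      intro x hx hxa
      simp only [Finset.mem_insert, Finset.notMem_empty, or_false] at hx
      exact absurd hx hxa
    · obtain ⟨f, hfs, hmax⟩ := ih hs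
      rcases τ.total a f with rfl | hlt | hlt
      · exact absurd hfs ha
      · refine ⟨f, Finset.mem_insert_of_mem hfs, fun x hx hxf => ?_⟩
        rcases Finset.mem_insert.1 hx with rfl | hxs
        · exact hlt
        · exact hmax x hxs hxf
      · refine ⟨a, Finset.mem_insert_self a s, fun x hx hxa => ?_⟩
        rcases Finset.mem_insert.1 hx with rfl | hxs
        · exact absurd rfl hxa
        · rcases eq_or_ne x f with rfl | hxf
          · exact hlt
          · exact τ.trans (hmax x hxs hxf) hlt

/-- Characterization of `≺`-pseudo-symmetric `C`-semigroups. -/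
theorem precPseudoSymmetric_iff {d : ℕ} (S : AddSubmonoid (Fin d → ℕ)) (hFG : S.FG)
    (hfin : (HSet S).Finite) (hne : (HSet S).Nonempty)
    (τ : TermOrder d) (F : Fin d → ℕ) (hF : IsFrob τ S F) :
    ((∀ i, Even (F i)) ∧ PF S = {F, fun i => F i / 2}) ↔
      ((∀ i, Even (F i)) ∧ ∀ g : Fin d → ℕ, natToQ g ∈ cone S →
        (g ∈ S ↔ (¬ ∃ s ∈ S, g + s = F) ∧ g ≠ fun i => F i / 2)) := by
  set half : Fin d → ℕ := fun i => F i / 2 with hhalf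
  have hFnotS : F ∉ S := hF.1.2
  have hFcone : natToQ F ∈ cone S := hF.1.1
  constructor
  · rintro ⟨hEv, hPF⟩
    have hhalfF : half + half = F := by
      funext i
      obtain ⟨k, hk⟩ := hEv i
      simp only [hhalf, Pi.add_apply]
      omega
    refine ⟨hEv, fun g hgcone => ?_⟩
    have hhalfPF : half ∈ PF S := by rw [hPF]; right; rfl
    have hhalfnotS : half ∉ S := hhalfPF.1.2
    constructor
    · intro hgS
      refine ⟨?_, ?_⟩
      · rintro ⟨s, hsS, hgs⟩
        exact hFnotS (hgs ▸ S.add_mem hgS hsS)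
      · rintro rfl
        exact hhalfnotS hgS
    · rintro ⟨hns, hneq⟩
      by_contra hgnotS
      have hgH : g ∈ HSet S := ⟨hgcone, hgnotS⟩
      set T : Set (Fin d → ℕ) := {x | x ∈ HSet S ∧ ∃ s ∈ S, g + s = x} with hT
      have hTfin : T.Finite := hfin.subset fun x hx => hx.1
      have hTne : (hTfin.toFinset).Nonempty :=
        ⟨g, hTfin.mem_toFinset.2 ⟨hgH, 0, S.zero_mem, add_zero g⟩⟩
      obtain ⟨f, hfT, hmax⟩ := exists_tau_max τ _ hTne
      rw [hTfin.mem_toFinset] at hfT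
      obtain ⟨⟨hfcone, hfnotS⟩, s, hsS, hgsf⟩ := hfT
      have hfPF : f ∈ PF S := by
        refine ⟨⟨hfcone, hfnotS⟩, fun s' hs' hs'0 => ?_⟩
        by_contra hfs'
        have hmem : f + s' ∈ T :=
          ⟨⟨by rw [natToQ_add]; exact cone_add hfcone (mem_cone_of_mem hs'), hfs'⟩,
            s + s', S.add_mem hsS hs', by rw [← add_assoc, hgsf]⟩
        have hne' : f + s' ≠ f := by
          intro h
          apply hs'0
          funext i
          have := congrFun h i
          simp only [Pi.add_apply] at this
          simpa using this
        have h1 := hmax _ (hTfin.mem_toFinset.2 hmem) hne'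
        have h2 := τ.add_compat f (τ.zero_lt s' hs'0)
        rw [zero_add, add_comm] at h2
        exact τ.irrefl f (τ.trans h2 h1)
      rw [hPF] at hfPF
      simp only [Set.mem_insert_iff, Set.mem_singleton_iff] at hfPF
      rcases hfPF with rfl | rfl
      · exact hns ⟨s, hsS, hgsf⟩
      · rcases eq_or_ne s 0 with rfl | hs0
        · rw [add_zero] at hgsf
          exact hneq hgsf
        · have hhsS : half + s ∈ S := hhalfPF.2 s hsS hs0
          apply hns
          refine ⟨s + half, by rwa [add_comm] at hhsS, ?_⟩
          rw [← add_assoc, hgsf, hhalfF]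
  · rintro ⟨hEv, hcond⟩
    have hhalfF : half + half = F := by
      funext i
      obtain ⟨k, hk⟩ := hEv i
      simp only [hhalf, Pi.add_apply]
      omega
    have hhalfcone : natToQ half ∈ cone S := by
      have heq : natToQ half = (1 / 2 : ℚ) • natToQ F := by
        funext i
        obtain ⟨k, hk⟩ := hEv i
        simp only [natToQ, hhalf, Pi.smul_apply, smul_eq_mul, hk]
        have : (k + k) / 2 = k := by omega
        rw [this]
        push_cast
        ring
      rw [heq]
      exact cone_smul hFcone (by norm_num)
    have hhalfnotS : half ∉ S := by
      intro h
      exact ((hcond half hhalfcone).1 h).2 rfl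
    have hFPF : F ∈ PF S := by
      refine ⟨hF.1, fun s hsS hs0 => ?_⟩
      have hc : natToQ (F + s) ∈ cone S := by
        rw [natToQ_add]; exact cone_add hFcone (mem_cone_of_mem hsS)
      refine (hcond _ hc).2 ⟨?_, ?_⟩
      · rintro ⟨s', hs', he⟩
        apply hs0
        funext i
        have := congrFun he i
        simp only [Pi.add_apply] at this
        simp only [Pi.zero_apply]
        omega
      · intro h
        apply hs0
        funext i
        have h1 := congrFun h i
        obtain ⟨k, hk⟩ := hEv i
        simp only [Pi.add_apply, hhalf] at h1
        simp only [Pi.zero_apply]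
        omega
    have hhPF : half ∈ PF S := by
      refine ⟨⟨hhalfcone, hhalfnotS⟩, fun s hsS hs0 => ?_⟩
      have hc : natToQ (half + s) ∈ cone S := by
        rw [natToQ_add]; exact cone_add hhalfcone (mem_cone_of_mem hsS)
      refine (hcond _ hc).2 ⟨?_, ?_⟩
      · rintro ⟨s', hs', he⟩
        apply hhalfnotS
        have hss' : s + s' = half := by
          funext i
          have h1 := congrFun he i
          have h2 := congrFun hhalfF i
          simp only [Pi.add_apply] at h1 h2 ⊢
          omega
        rw [← hss']
        exact S.add_mem hsS hs'
      · intro h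
        apply hs0
        funext i
        have := congrFun h i
        simp only [Pi.add_apply] at this
        simp only [Pi.zero_apply]
        omega
    refine ⟨hEv, ?_⟩
    ext f
    simp only [Set.mem_insert_iff, Set.mem_singleton_iff]
    constructor
    · intro hfPF
      have hfc := hfPF.1.1
      have hfnS := hfPF.1.2
      by_contra hcontra
      push_neg at hcontra
      obtain ⟨hf1, hf2⟩ := hcontra
      rcases Classical.em (∃ s ∈ S, f + s = F) with ⟨s, hsS, hfs⟩ | hno
      · rcases eq_or_ne s 0 with rfl | hs0
        · rw [add_zero] at hfs
          exact hf1 hfs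
        · exact hFnotS (hfs ▸ hfPF.2 s hsS hs0)
      · exact hfnS ((hcond f hfc).2 ⟨hno, hf2⟩)
    · rintro (rfl | rfl)
      · exact hFPF
      · exact hhPF
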